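/- In the flip-flop poset R built from posets P (with minimal element x) and Q (with minimal element y), if e(P−x) > 0 and e(Q−y) > 0, then ρ(R,z) = ρ(P,x) + ρ(Q,y), where ρ(S,s) = e(S)/e(S−s). -/

import Mathlib

/-- The number of linear extensions of the finite poset `(α, O)`. -/
noncomputable def eCount (α : Type) [Fintype α] (O : PartialOrder α) : ℕ :=
  Nat.card {f : α ≃ Fin (Fintype.card α) // ∀ a b : α, O.le a b → f a ≤ f b}

/-- The induced order on `P − x`. -/
def delOrder {α : Type} (O : PartialOrder α) (x : α) : PartialOrder {a : α // a ≠ x} where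
  le a b := O.le a.1 b.1
  lt a b := O.le a.1 b.1 ∧ ¬ O.le b.1 a.1
  lt_iff_le_not_ge := fun _ _ => Iff.rfl
  le_refl a := O.le_refl a.1
  le_trans a b c := O.le_trans a.1 b.1 c.1
  le_antisymm a b h h' := Subtype.ext (O.le_antisymm a.1 b.1 h h')

/-- The number of linear extensions of `P − x`. -/
noncomputable def eDel (α : Type) [Fintype α] [DecidableEq α] (O : PartialOrder α) (x : α) : ℕ :=
  eCount {a : α // a ≠ x} (delOrder O x)

/-- `x` is a minimal element of the poset `(α, O)`. -/
def isMinimal {α : Type} (O : PartialOrder α) (x : α) : Prop :=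
  ∀ a : α, O.le a x → a = x

/-- The width of a finite poset: the maximal size of an antichain. -/
noncomputable def pwidth (α : Type) [Fintype α] (O : PartialOrder α) : ℕ :=
  sSup {n : ℕ | ∃ s : Finset α,
    (∀ a ∈ s, ∀ b ∈ s, a ≠ b → ¬ O.le a b) ∧ s.card = n}

/-- The underlying relation of the linear (ordinal) sum `P <| Q`:
elements of `α` are below all elements of `β`. -/
def linLE {α β : Type} (O : PartialOrder α) (O' : PartialOrder β) :
    α ⊕ β → α ⊕ β → Prop
  | .inl a, .inl a' => O.le a a'
  | .inr b, .inr b' => O'.le b b'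
  | .inl _, .inr _ => True
  | .inr _, .inl _ => False

/-- The linear (ordinal) sum `P <| Q`. -/
def linOrder {α β : Type} (O : PartialOrder α) (O' : PartialOrder β) :
    PartialOrder (α ⊕ β) where
  le := linLE O O'
  lt a b := linLE O O' a b ∧ ¬ linLE O O' b a
  lt_iff_le_not_ge := fun _ _ => Iff.rfl
  le_refl := by
    rintro (a | b)
    · exact O.le_refl a
    · exact O'.le_refl b
  le_trans := by
    rintro (a | a) (b | b) (c | c) h h' <;>
      first
        | exact h.elim
        | exact h'.elim
        | trivial
        | exact O.le_trans _ _ _ h h'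
        | exact O'.le_trans _ _ _ h h'
  le_antisymm := by
    rintro (a | a) (b | b) h h' <;>
      first
        | exact h.elim
        | exact h'.elim
        | exact congrArg Sum.inl (O.le_antisymm _ _ h h')
        | exact congrArg Sum.inr (O'.le_antisymm _ _ h h')

/-- The relation of the parallel (disjoint) sum `P ⊕ Q`. -/
def parLE {α β : Type} (O : PartialOrder α) (O' : PartialOrder β) :
    α ⊕ β → α ⊕ β → Prop
  | .inl a, .inl a' => O.le a a'
  | .inr b, .inr b' => O'.le b b'
  | .inl _, .inr _ => False
  | .inr _, .inl _ => False

/-- The parallel (disjoint) sum `P ⊕ Q`. -/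
def parOrder {α β : Type} (O : PartialOrder α) (O' : PartialOrder β) :
    PartialOrder (α ⊕ β) where
  le := parLE O O'
  lt a b := parLE O O' a b ∧ ¬ parLE O O' b a
  lt_iff_le_not_ge := fun _ _ => Iff.rfl
  le_refl := by
    rintro (a | b)
    · exact O.le_refl a
    · exact O'.le_refl b
  le_trans := by
    rintro (a | a) (b | b) (c | c) h h' <;>
      first
        | exact h.elim
        | exact h'.elim
        | exact O.le_trans _ _ _ h h'
        | exact O'.le_trans _ _ _ h h'
  le_antisymm := by
    rintro (a | a) (b | b) h h' <;>
      first
        | exact h.elim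
        | exact h'.elim
        | exact congrArg Sum.inl (O.le_antisymm _ _ h h')
        | exact congrArg Sum.inr (O'.le_antisymm _ _ h h')

/-- The dual order. -/
def dualOrder {α : Type} (O : PartialOrder α) : PartialOrder α where
  le a b := O.le b a
  lt a b := O.le b a ∧ ¬ O.le a b
  lt_iff_le_not_ge := fun _ _ => Iff.rfl
  le_refl a := O.le_refl a
  le_trans a b c h h' := O.le_trans c b a h' h
  le_antisymm a b h h' := O.le_antisymm a b h' h

/-- The relation of the hybrid sum `Q <_x P`, where `P` lives on `α` (the `inl`
component), `Q` lives on `β` (the `inr` component), and `x : α` is a (minimal)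
element of `P`: every element of `Q` is below every element of `P` except `x`,
and `x` is incomparable to all of `Q`.  (For `x` minimal, `¬ a ≤ x ↔ a ≠ x`.) -/
def hybLE {α β : Type} (O : PartialOrder α) (O' : PartialOrder β) (x : α) :
    α ⊕ β → α ⊕ β → Prop
  | .inl a, .inl a' => O.le a a'
  | .inr b, .inr b' => O'.le b b'
  | .inr _, .inl a => ¬ O.le a x
  | .inl _, .inr _ => False

/-- The hybrid sum `Q <_x P`. -/
def hybOrder {α β : Type} (O : PartialOrder α) (O' : PartialOrder β) (x : α) :
    PartialOrder (α ⊕ β) where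
  le := hybLE O O' x
  lt a b := hybLE O O' x a b ∧ ¬ hybLE O O' x b a
  lt_iff_le_not_ge := fun _ _ => Iff.rfl
  le_refl := by
    rintro (a | b)
    · exact O.le_refl a
    · exact O'.le_refl b
  le_trans := by
    rintro (a | a) (b | b) (c | c) h h' <;>
      first
        | exact h.elim
        | exact h'.elim
        | exact h'
        | exact O.le_trans _ _ _ h h'
        | exact O'.le_trans _ _ _ h h'
        | exact fun hc => h (O.le_trans _ _ _ h' hc)
  le_antisymm := by
    rintro (a | a) (b | b) h h' <;>
      first
        | exact h.elim
        | exact h'.elim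
        | exact congrArg Sum.inl (O.le_antisymm _ _ h h')
        | exact congrArg Sum.inr (O'.le_antisymm _ _ h h')

/-- The carrier of the flip-flop poset built from `P` on `α` (with `x` removed),
`Q` on `β` (with `y` removed), and the two extra elements `z = Sum.inr false`
and `v = Sum.inr true`. -/
abbrev FlipCarrier (α β : Type) (x : α) (y : β) : Type :=
  ({a : α // a ≠ x} ⊕ {b : β // b ≠ y}) ⊕ Bool

/-- The relation of the flip-flop poset: the dual order on `P − x`, the order on
`Q − y`; `p ≺ z` for `p` with `x ≺ p` in `P`; `z ≺ q` for `q` with `y ≺ q` in `Q`;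
`p ≺ v ≺ q` for all `p ∈ P − x`, `q ∈ Q − y`; and `z, v` incomparable. -/
def ffLE {α β : Type} (O : PartialOrder α) (O' : PartialOrder β) (x : α) (y : β) :
    FlipCarrier α β x y → FlipCarrier α β x y → Prop
  | .inl (.inl p), .inl (.inl p') => O.le p'.1 p.1
  | .inl (.inr q), .inl (.inr q') => O'.le q.1 q'.1
  | .inl (.inl _), .inl (.inr _) => True
  | .inl (.inr _), .inl (.inl _) => False
  | .inl (.inl _), .inr true => True
  | .inl (.inl p), .inr false => O.le x p.1
  | .inr true, .inl (.inr _) => True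
  | .inr false, .inl (.inr q) => O'.le y q.1
  | .inl (.inr _), .inr _ => False
  | .inr _, .inl (.inl _) => False
  | .inr c, .inr c' => c = c'

/-- The flip-flop poset. -/
def ffOrder {α β : Type} (O : PartialOrder α) (O' : PartialOrder β) (x : α) (y : β) :
    PartialOrder (FlipCarrier α β x y) where
  le := ffLE O O' x y
  lt a b := ffLE O O' x y a b ∧ ¬ ffLE O O' x y b a
  lt_iff_le_not_ge := fun _ _ => Iff.rfl
  le_refl := by
    rintro ((p | q) | (_ | _)) <;>
      first
        | exact O.le_refl _
        | exact O'.le_refl _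
        | rfl
  le_trans := by
    rintro ((p | q) | (_ | _)) ((p' | q') | (_ | _)) ((p'' | q'') | (_ | _)) h h' <;>
      first
        | trivial
        | exact h.elim
        | exact h'.elim
        | exact O.le_trans _ _ _ h' h
        | exact O'.le_trans _ _ _ h h'
        | exact O.le_trans _ _ _ h h'
        | exact O'.le_trans _ _ _ h' h
        | simp_all
  le_antisymm := by
    rintro ((p | q) | (_ | _)) ((p' | q') | (_ | _)) h h' <;>
      first
        | exact h.elim
        | exact h'.elim
        | rfl
        | exact congrArg (fun t => Sum.inl (Sum.inl t)) (Subtype.ext (O.le_antisymm _ _ h' h))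
        | exact congrArg (fun t => Sum.inl (Sum.inr t)) (Subtype.ext (O'.le_antisymm _ _ h h'))
        | exact Bool.noConfusion h
        | simp_all

/-- The value of the simple continued fraction `[b₀; b₁, …, b_m]`. -/
def cfVal : List ℕ → ℚ
  | [] => 0
  | [b] => (b : ℚ)
  | b :: l => (b : ℚ) + (cfVal l)⁻¹

/-- `l = [b₀, b₁, …, b_m]` is an admissible simple continued fraction expansion:
nonempty, `b₁, …, b_m ≥ 1`, and the last quotient is `≥ 2` when `m ≥ 1`.
(Such an expansion exists and is unique for every nonnegative rational.) -/
def cfAdmissible (l : List ℕ) : Prop :=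
  l ≠ [] ∧ (∀ i : Fin l.length, 0 < i.1 → 1 ≤ l.get i) ∧
    (2 ≤ l.length → ∀ b ∈ l.getLast?, 2 ≤ b)

/-- `gcfAux a b m k` is the value of the tail
`[a_{i+1}, …, a_m ; b_i, …, b_m]` of the generalized continued fraction, where
`i = m - k`; thus `gcfAux a b m m = b₀ + a₁/(b₁ + a₂/(b₂ + ⋯ + a_m/b_m))`. -/
def gcfAux (a b : ℕ → ℕ) (m : ℕ) : ℕ → ℚ
  | 0 => (b m : ℚ)
  | k + 1 => (b (m - (k + 1)) : ℚ) + (a (m - k) : ℚ) / gcfAux a b m k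

/-- The numerators `C_i` of the generalized continued fraction, indexed so that
`gcfC a b m k = C_{m-k}`: they satisfy `C_m = b_m`, `D_m = 1`, `D_i = C_{i+1}`,
`C_i = b_i D_i + a_{i+1} D_{i+1}`. -/
def gcfC (a b : ℕ → ℕ) (m : ℕ) : ℕ → ℕ
  | 0 => b m
  | 1 => b (m - 1) * b m + a m
  | k + 2 => b (m - (k + 2)) * gcfC a b m (k + 1) + a (m - (k + 1)) * gcfC a b m k

/-- The denominators `D_i`, indexed so that `gcfD a b m k = D_{m-k}`. -/
def gcfD (a b : ℕ → ℕ) (m : ℕ) : ℕ → ℕ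
  | 0 => 1
  | k + 1 => gcfC a b m k


section helpers

set_option maxHeartbeats 1000000 in
lemma eCount_congr {γ δ : Type} [Fintype γ] [Fintype δ]
    (Oγ : PartialOrder γ) (Oδ : PartialOrder δ) (e : γ ≃ δ)
    (h : ∀ a b, Oγ.le a b ↔ Oδ.le (e a) (e b)) :
    eCount γ Oγ = eCount δ Oδ := by
  have hc : Fintype.card γ = Fintype.card δ := Fintype.card_congr e
  apply Nat.card_congr
  refine
    { toFun := fun f => ⟨(e.symm.trans f.1).trans (finCongr hc), ?_⟩
      invFun := fun g => ⟨(e.trans g.1).trans (finCongr hc.symm), ?_⟩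
      left_inv := ?_, right_inv := ?_ }
  · intro a b hab
    have hab' : Oγ.le (e.symm a) (e.symm b) := by
      refine (h _ _).mpr ?_
      rwa [e.apply_symm_apply, e.apply_symm_apply]
    have := f.2 _ _ hab'
    simp only [Equiv.trans_apply, finCongr_apply, Fin.le_def, Fin.coe_cast]
    exact this
  · intro a b hab
    have := g.2 (e a) (e b) ((h a b).mp hab)
    simp only [Equiv.trans_apply, finCongr_apply, Fin.le_def, Fin.coe_cast]
    exact this
  · intro f; apply Subtype.ext; apply Equiv.ext; intro a
    apply Fin.ext
    simp only [Equiv.trans_apply, finCongr_apply, Fin.coe_cast, Equiv.symm_apply_apply]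
  · intro g; apply Subtype.ext; apply Equiv.ext; intro a
    apply Fin.ext
    simp only [Equiv.trans_apply, finCongr_apply, Fin.coe_cast, Equiv.apply_symm_apply]

lemma eCount_dual {γ : Type} [Fintype γ] (Oγ : PartialOrder γ) :
    eCount γ (dualOrder Oγ) = eCount γ Oγ := by
  apply Nat.card_congr
  refine
    { toFun := fun f => ⟨f.1.trans Fin.revPerm, ?_⟩
      invFun := fun f => ⟨f.1.trans Fin.revPerm, ?_⟩
      left_inv := ?_, right_inv := ?_ }
  · intro a b hab
    simpa [Fin.rev_le_rev] using f.2 b a hab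
  · intro a b hab
    simpa [Fin.rev_le_rev] using f.2 b a hab
  · intro f; apply Subtype.ext; apply Equiv.ext; intro a
    simp
  · intro f; apply Subtype.ext; apply Equiv.ext; intro a
    simp

lemma eCount_punit (Op : PartialOrder PUnit) : eCount PUnit Op = 1 := by
  rw [eCount, Nat.card_eq_one_iff_unique]
  have hs : Subsingleton (Fin (Fintype.card PUnit)) := by
    rw [Fintype.card_punit]; infer_instance
  constructor
  · constructor
    intro f g
    apply Subtype.ext; apply Equiv.ext; intro u
    exact Subsingleton.elim _ _
  · exact ⟨⟨Fintype.equivFin PUnit, fun a b _ =>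
      le_of_eq (congrArg _ (Subsingleton.elim a b))⟩⟩

lemma lin_le_inl_inr {γ δ : Type} (Oγ : PartialOrder γ) (Oδ : PartialOrder δ)
    (a : γ) (b : δ) : (linOrder Oγ Oδ).le (.inl a) (.inr b) := trivial

lemma linExt_inl_lt_inr {γ δ : Type} [Fintype γ] [Fintype δ]
    (Oγ : PartialOrder γ) (Oδ : PartialOrder δ)
    (f : (γ ⊕ δ) ≃ Fin (Fintype.card (γ ⊕ δ)))
    (hf : ∀ a b, (linOrder Oγ Oδ).le a b → f a ≤ f b)
    (a : γ) (b : δ) : f (.inl a) < f (.inr b) :=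
  lt_of_le_of_ne (hf _ _ (lin_le_inl_inr Oγ Oδ a b)) (f.injective.ne (by simp))

lemma linExt_inl_lt {γ δ : Type} [Fintype γ] [Fintype δ]
    (Oγ : PartialOrder γ) (Oδ : PartialOrder δ)
    (f : (γ ⊕ δ) ≃ Fin (Fintype.card (γ ⊕ δ)))
    (hf : ∀ a b, (linOrder Oγ Oδ).le a b → f a ≤ f b)
    (a : γ) : (f (.inl a)).val < Fintype.card γ := by
  have h1 : (Finset.univ : Finset δ).card ≤ (Finset.Ioi (f (Sum.inl a))).card :=
    Finset.card_le_card_of_injOn (fun b => f (Sum.inr b))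
      (fun b _ => Finset.mem_Ioi.mpr (linExt_inl_lt_inr Oγ Oδ f hf a b))
      (fun b _ b' _ hbb => by simpa using f.injective hbb)
  rw [Finset.card_univ, Fin.card_Ioi] at h1
  have h2 := (f (Sum.inl a)).isLt
  have hc : Fintype.card (γ ⊕ δ) = Fintype.card γ + Fintype.card δ :=
    Fintype.card_sum
  omega

lemma linExt_le_inr {γ δ : Type} [Fintype γ] [Fintype δ]
    (Oγ : PartialOrder γ) (Oδ : PartialOrder δ)
    (f : (γ ⊕ δ) ≃ Fin (Fintype.card (γ ⊕ δ)))
    (hf : ∀ a b, (linOrder Oγ Oδ).le a b → f a ≤ f b)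
    (b : δ) : Fintype.card γ ≤ (f (.inr b)).val := by
  have h1 : (Finset.univ : Finset γ).card ≤ (Finset.Iio (f (Sum.inr b))).card :=
    Finset.card_le_card_of_injOn (fun a => f (Sum.inl a))
      (fun a _ => Finset.mem_Iio.mpr (linExt_inl_lt_inr Oγ Oδ f hf a b))
      (fun a _ a' _ haa => by simpa using f.injective haa)
  rw [Finset.card_univ, Fin.card_Iio] at h1
  exact h1

lemma eCount_lin {γ δ : Type} [Fintype γ] [Fintype δ]
    (Oγ : PartialOrder γ) (Oδ : PartialOrder δ) :
    eCount (γ ⊕ δ) (linOrder Oγ Oδ) = eCount γ Oγ * eCount δ Oδ := by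
  rw [eCount, eCount, eCount, ← Nat.card_prod]
  apply Nat.card_congr
  have hc : Fintype.card (γ ⊕ δ) = Fintype.card γ + Fintype.card δ :=
    Fintype.card_sum
  refine
    { toFun := fun f =>
        (⟨Equiv.ofBijective
            (fun a => (⟨(f.1 (.inl a)).val, linExt_inl_lt Oγ Oδ f.1 f.2 a⟩ : Fin (Fintype.card γ)))
            ((Fintype.bijective_iff_injective_and_card _).mpr
              ⟨fun a a' haa => Sum.inl_injective (f.1.injective (Fin.ext (by
                  simpa using congrArg Fin.val haa))), by simp⟩), ?_⟩,
         ⟨Equiv.ofBijective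
            (fun b => (⟨(f.1 (.inr b)).val - Fintype.card γ, by
              have h2 := (f.1 (.inr b)).isLt
              have h3 := linExt_le_inr Oγ Oδ f.1 f.2 b
              omega⟩ : Fin (Fintype.card δ)))
            ((Fintype.bijective_iff_injective_and_card _).mpr
              ⟨fun b b' hbb => by
                have h1 := linExt_le_inr Oγ Oδ f.1 f.2 b
                have h2 := linExt_le_inr Oγ Oδ f.1 f.2 b'
                have h3 := congrArg Fin.val hbb
                simp only at h3
                exact Sum.inr_injective (f.1.injective (Fin.ext (by omega))), by simp⟩), ?_⟩)
      invFun := fun gh =>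
        ⟨(Equiv.sumCongr gh.1.1 gh.2.1).trans (finSumFinEquiv.trans (finCongr hc.symm)), ?_⟩
      left_inv := ?_, right_inv := ?_ }
  · intro a a' haa
    simp only [Equiv.ofBijective_apply, Fin.mk_le_mk]
    exact f.2 _ _ haa
  · intro b b' hbb
    simp only [Equiv.ofBijective_apply, Fin.mk_le_mk]
    have h1 := linExt_le_inr Oγ Oδ f.1 f.2 b
    have h2 : (f.1 (.inr b)) ≤ (f.1 (.inr b')) := f.2 _ _ hbb
    rw [Fin.le_def] at h2
    omega
  · rintro (a | b) (a' | b') hrel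
    · simp only [Equiv.trans_apply, Equiv.sumCongr_apply, Sum.map_inl,
        finSumFinEquiv_apply_left, finCongr_apply, Fin.le_def, Fin.coe_cast, Fin.coe_castAdd]
      have := gh.1.2 a a' hrel
      rw [Fin.le_def] at this
      exact this
    · simp only [Equiv.trans_apply, Equiv.sumCongr_apply, Sum.map_inl, Sum.map_inr,
        finSumFinEquiv_apply_left, finSumFinEquiv_apply_right, finCongr_apply,
        Fin.le_def, Fin.coe_cast, Fin.coe_castAdd, Fin.coe_natAdd]
      have := (gh.1.1 a).isLt
      omega
    · exact hrel.elim
    · simp only [Equiv.trans_apply, Equiv.sumCongr_apply, Sum.map_inr,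
        finSumFinEquiv_apply_right, finCongr_apply, Fin.le_def, Fin.coe_cast, Fin.coe_natAdd]
      have := gh.2.2 b b' hrel
      rw [Fin.le_def] at this
      omega
  · intro f
    apply Subtype.ext; apply Equiv.ext
    rintro (a | b)
    · apply Fin.ext
      simp
    · apply Fin.ext
      have := linExt_le_inr Oγ Oδ f.1 f.2 b
      simp only [Equiv.trans_apply, Equiv.sumCongr_apply, Sum.map_inr,
        finSumFinEquiv_apply_right, finCongr_apply, Fin.coe_cast, Fin.coe_natAdd,
        Equiv.ofBijective_apply]
      omega
  · intro gh
    apply Prod.ext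
    · apply Subtype.ext; apply Equiv.ext; intro a
      apply Fin.ext; simp
    · apply Subtype.ext; apply Equiv.ext; intro b
      apply Fin.ext; simp

end helpers
section flip

variable {α β : Type} [Fintype α] [Fintype β] [DecidableEq α] [DecidableEq β]

/-- `z < v` rearrangement equivalence. -/
def phi1 (x : α) (y : β) :
    FlipCarrier α β x y ≃ ((α ⊕ PUnit) ⊕ {b : β // b ≠ y}) where
  toFun r := match r with
    | .inl (.inl p) => .inl (.inl p.1)
    | .inl (.inr q) => .inr q
    | .inr false => .inl (.inl x)
    | .inr true => .inl (.inr PUnit.unit)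
  invFun c := match c with
    | .inl (.inl a) => if h : a = x then .inr false else .inl (.inl ⟨a, h⟩)
    | .inl (.inr _) => .inr true
    | .inr q => .inl (.inr q)
  left_inv := by
    rintro ((p | q) | (_ | _))
    · simp [p.2]
    · rfl
    · simp
    · rfl
  right_inv := by
    rintro ((a | u) | q)
    · by_cases h : a = x
      · subst h; simp
      · simp [h]
    · cases u; rfl
    · rfl

/-- `v < z` rearrangement equivalence. -/
def phi2 (x : α) (y : β) :
    FlipCarrier α β x y ≃ (({a : α // a ≠ x} ⊕ PUnit) ⊕ β) where
  toFun r := match r with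
    | .inl (.inl p) => .inl (.inl p)
    | .inl (.inr q) => .inr q.1
    | .inr false => .inr y
    | .inr true => .inl (.inr PUnit.unit)
  invFun c := match c with
    | .inl (.inl p) => .inl (.inl p)
    | .inl (.inr _) => .inr true
    | .inr b => if h : b = y then .inr false else .inl (.inr ⟨b, h⟩)
  left_inv := by
    rintro ((p | q) | (_ | _))
    · rfl
    · simp [q.2]
    · simp
    · rfl
  right_inv := by
    rintro ((p | u) | b)
    · rfl
    · cases u; rfl
    · by_cases h : b = y
      · subst h; simp
      · simp [h]

variable (O : PartialOrder α) (O' : PartialOrder β) (x : α) (y : β)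

lemma ff_le_p_q (p : {a : α // a ≠ x}) (q : {b : β // b ≠ y}) :
    (ffOrder O O' x y).le (.inl (.inl p)) (.inl (.inr q)) := trivial

lemma ff_le_p_v (p : {a : α // a ≠ x}) :
    (ffOrder O O' x y).le (.inl (.inl p)) (.inr true) := trivial

lemma ff_le_v_q (q : {b : β // b ≠ y}) :
    (ffOrder O O' x y).le (.inr true) (.inl (.inr q)) := trivial

lemma claim1 {N : ℕ} (hx : isMinimal O x)
    (f : FlipCarrier α β x y ≃ Fin N) :
    ((∀ a b, (ffOrder O O' x y).le a b → f a ≤ f b) ∧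
        f (.inr false) < f (.inr true)) ↔
      (∀ r r', (linOrder (linOrder (dualOrder O) inferInstance)
          (delOrder O' y)).le (phi1 x y r) (phi1 x y r') → f r ≤ f r') := by
  constructor
  · rintro ⟨hmono, hzv⟩
    rintro ((p | q) | (_ | _)) ((p' | q') | (_ | _)) h
    · exact hmono _ _ h
    · exact hmono _ _ (ff_le_p_q O O' x y p q')
    · exact hmono _ _ h
    · exact hmono _ _ (ff_le_p_v O O' x y p)
    · exact h.elim
    · exact hmono _ _ h
    · exact h.elim
    · exact h.elim
    · exact absurd (hx _ h) p'.2
    · exact le_trans hzv.le (hmono _ _ (ff_le_v_q O O' x y q'))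
    · exact le_refl _
    · exact hzv.le
    · exact h.elim
    · exact hmono _ _ (ff_le_v_q O O' x y q')
    · exact h.elim
    · exact le_refl _
  · intro H
    refine ⟨?_, ?_⟩
    · rintro ((p | q) | (_ | _)) ((p' | q') | (_ | _)) hab
      · exact H _ _ hab
      · exact H _ _ (by exact trivial)
      · exact H _ _ hab
      · exact H _ _ (by exact trivial)
      · exact hab.elim
      · exact H _ _ hab
      · exact hab.elim
      · exact hab.elim
      · exact hab.elim
      · exact H _ _ (by exact trivial)
      · exact le_refl _
      · exact Bool.noConfusion hab
      · exact hab.elim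
      · exact H _ _ (by exact trivial)
      · exact Bool.noConfusion hab
      · exact le_refl _
    · exact lt_of_le_of_ne (H _ _ (by exact trivial)) (f.injective.ne (by simp))

lemma claim2 {N : ℕ} (hy : isMinimal O' y)
    (f : FlipCarrier α β x y ≃ Fin N) :
    ((∀ a b, (ffOrder O O' x y).le a b → f a ≤ f b) ∧
        f (.inr true) < f (.inr false)) ↔
      (∀ r r', (linOrder (linOrder (dualOrder (delOrder O x)) inferInstance)
          O').le (phi2 x y r) (phi2 x y r') → f r ≤ f r') := by
  constructor
  · rintro ⟨hmono, hvz⟩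
    rintro ((p | q) | (_ | _)) ((p' | q') | (_ | _)) h
    · exact hmono _ _ h
    · exact hmono _ _ (ff_le_p_q O O' x y p q')
    · exact le_trans (hmono _ _ (ff_le_p_v O O' x y p)) hvz.le
    · exact hmono _ _ (ff_le_p_v O O' x y p)
    · exact h.elim
    · exact hmono _ _ h
    · exact absurd (hy _ h) q.2
    · exact h.elim
    · exact h.elim
    · exact hmono _ _ h
    · exact le_refl _
    · exact h.elim
    · exact h.elim
    · exact hmono _ _ (ff_le_v_q O O' x y q')
    · exact hvz.le
    · exact le_refl _
  · intro H
    refine ⟨?_, ?_⟩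
    · rintro ((p | q) | (_ | _)) ((p' | q') | (_ | _)) hab
      · exact H _ _ hab
      · exact H _ _ (by exact trivial)
      · exact H _ _ (by exact trivial)
      · exact H _ _ (by exact trivial)
      · exact hab.elim
      · exact H _ _ hab
      · exact hab.elim
      · exact hab.elim
      · exact hab.elim
      · exact H _ _ hab
      · exact le_refl _
      · exact Bool.noConfusion hab
      · exact hab.elim
      · exact H _ _ (by exact trivial)
      · exact Bool.noConfusion hab
      · exact le_refl _
    · exact lt_of_le_of_ne (H _ _ (by exact trivial)) (f.injective.ne (by simp))

end flip
section flip2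

variable {α β : Type} [Fintype α] [Fintype β] [DecidableEq α] [DecidableEq β]
variable (O : PartialOrder α) (O' : PartialOrder β) (x : α) (y : β)

set_option maxHeartbeats 1000000 in
lemma eCount_ff (hx : isMinimal O x) (hy : isMinimal O' y) :
    eCount (FlipCarrier α β x y) (ffOrder O O' x y) =
      eCount ((α ⊕ PUnit) ⊕ {b : β // b ≠ y})
        (linOrder (linOrder (dualOrder O) inferInstance) (delOrder O' y)) +
      eCount (({a : α // a ≠ x} ⊕ PUnit) ⊕ β)
        (linOrder (linOrder (dualOrder (delOrder O x)) inferInstance) O') := by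
  classical
  have hc1 : Fintype.card (FlipCarrier α β x y) =
      Fintype.card ((α ⊕ PUnit) ⊕ {b : β // b ≠ y}) := Fintype.card_congr (phi1 x y)
  have hc2 : Fintype.card (FlipCarrier α β x y) =
      Fintype.card (({a : α // a ≠ x} ⊕ PUnit) ⊕ β) := Fintype.card_congr (phi2 x y)
  rw [eCount, eCount, eCount, ← Nat.card_sum]
  apply Nat.card_congr
  refine Equiv.trans
    (Equiv.sumCompl (fun f : {f : FlipCarrier α β x y ≃ Fin (Fintype.card (FlipCarrier α β x y)) //
        ∀ a b, (ffOrder O O' x y).le a b → f a ≤ f b} =>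
      f.1 (.inr false) < f.1 (.inr true))).symm ?_
  refine Equiv.sumCongr ?_ (Equiv.trans (Equiv.subtypeEquivRight
    (q := fun F => F.1 (.inr true) < F.1 (.inr false)) (fun F => ?_)) ?_)
  · -- E1 : z < v part
    refine
      { toFun := fun F => ⟨((phi1 x y).symm.trans F.1.1).trans (finCongr hc1), ?_⟩
        invFun := fun G =>
          ⟨⟨((phi1 x y).trans G.1).trans (finCongr hc1.symm),
            ((claim1 O O' x y hx (((phi1 x y).trans G.1).trans (finCongr hc1.symm))).mpr
              (fun r r' h => by
                have := G.2 _ _ h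
                rw [Fin.le_def] at this
                simp only [Equiv.trans_apply, finCongr_apply, Fin.le_def, Fin.coe_cast]
                exact this)).1⟩,
            ((claim1 O O' x y hx (((phi1 x y).trans G.1).trans (finCongr hc1.symm))).mpr
              (fun r r' h => by
                have := G.2 _ _ h
                rw [Fin.le_def] at this
                simp only [Equiv.trans_apply, finCongr_apply, Fin.le_def, Fin.coe_cast]
                exact this)).2⟩
        left_inv := ?_, right_inv := ?_ }
    · intro c c' hcc
      obtain ⟨r, rfl⟩ := (phi1 x y).surjective c
      obtain ⟨r', rfl⟩ := (phi1 x y).surjective c'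
      have H := (claim1 O O' x y hx F.1.1).mp ⟨F.1.2, F.2⟩
      have := H r r' hcc
      rw [Fin.le_def] at this
      simp only [Equiv.trans_apply, Equiv.symm_apply_apply, finCongr_apply, Fin.le_def,
        Fin.coe_cast]
      exact this
    · intro F
      apply Subtype.ext; apply Subtype.ext; apply Equiv.ext; intro r
      apply Fin.ext
      simp only [Equiv.trans_apply, finCongr_apply, Fin.coe_cast, Equiv.symm_apply_apply]
    · intro G
      apply Subtype.ext; apply Equiv.ext; intro c
      apply Fin.ext
      simp only [Equiv.trans_apply, finCongr_apply, Fin.coe_cast, Equiv.apply_symm_apply]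
  · -- ¬(z < v) ↔ v < z
    constructor
    · intro h
      exact ((F.1.injective.ne (by simp)).lt_or_gt.resolve_left h)
    · exact fun h h' => absurd h' h.asymm
  · -- E2 : v < z part
    refine
      { toFun := fun F => ⟨((phi2 x y).symm.trans F.1.1).trans (finCongr hc2), ?_⟩
        invFun := fun G =>
          ⟨⟨((phi2 x y).trans G.1).trans (finCongr hc2.symm),
            ((claim2 O O' x y hy (((phi2 x y).trans G.1).trans (finCongr hc2.symm))).mpr
              (fun r r' h => by
                have := G.2 _ _ h
                rw [Fin.le_def] at this
                simp only [Equiv.trans_apply, finCongr_apply, Fin.le_def, Fin.coe_cast]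
                exact this)).1⟩,
            ((claim2 O O' x y hy (((phi2 x y).trans G.1).trans (finCongr hc2.symm))).mpr
              (fun r r' h => by
                have := G.2 _ _ h
                rw [Fin.le_def] at this
                simp only [Equiv.trans_apply, finCongr_apply, Fin.le_def, Fin.coe_cast]
                exact this)).2⟩
        left_inv := ?_, right_inv := ?_ }
    · intro c c' hcc
      obtain ⟨r, rfl⟩ := (phi2 x y).surjective c
      obtain ⟨r', rfl⟩ := (phi2 x y).surjective c'
      have H := (claim2 O O' x y hy F.1.1).mp ⟨F.1.2, F.2⟩
      have := H r r' hcc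
      rw [Fin.le_def] at this
      simp only [Equiv.trans_apply, Equiv.symm_apply_apply, finCongr_apply, Fin.le_def,
        Fin.coe_cast]
      exact this
    · intro F
      apply Subtype.ext; apply Subtype.ext; apply Equiv.ext; intro r
      apply Fin.ext
      simp only [Equiv.trans_apply, finCongr_apply, Fin.coe_cast, Equiv.symm_apply_apply]
    · intro G
      apply Subtype.ext; apply Equiv.ext; intro c
      apply Fin.ext
      simp only [Equiv.trans_apply, finCongr_apply, Fin.coe_cast, Equiv.apply_symm_apply]

/-- Deletion equivalence for `R − z`. -/
def psi (x : α) (y : β) :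
    {r : FlipCarrier α β x y // r ≠ .inr false} ≃
      (({a : α // a ≠ x} ⊕ PUnit) ⊕ {b : β // b ≠ y}) where
  toFun r := match r with
    | ⟨.inl (.inl p), _⟩ => .inl (.inl p)
    | ⟨.inl (.inr q), _⟩ => .inr q
    | ⟨.inr true, _⟩ => .inl (.inr PUnit.unit)
    | ⟨.inr false, h⟩ => absurd rfl h
  invFun c := match c with
    | .inl (.inl p) => ⟨.inl (.inl p), by simp⟩
    | .inl (.inr _) => ⟨.inr true, by simp⟩
    | .inr q => ⟨.inl (.inr q), by simp⟩
  left_inv := by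
    rintro ⟨((p | q) | (_ | _)), h⟩
    · rfl
    · rfl
    · exact absurd rfl h
    · rfl
  right_inv := by
    rintro ((p | u) | q)
    · rfl
    · cases u; rfl
    · rfl

lemma eDel_ff :
    eDel (FlipCarrier α β x y) (ffOrder O O' x y) (Sum.inr false) =
      eCount (({a : α // a ≠ x} ⊕ PUnit) ⊕ {b : β // b ≠ y})
        (linOrder (linOrder (dualOrder (delOrder O x)) inferInstance) (delOrder O' y)) := by
  unfold eDel
  refine eCount_congr _ _ (psi x y) ?_
  rintro ⟨((p | q) | (_ | _)), h⟩ ⟨((p' | q') | (_ | _)), h'⟩ <;>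
    first
      | exact absurd rfl h
      | exact absurd rfl h'
      | exact Iff.rfl
      | exact ⟨fun _ => trivial, fun _ => rfl⟩

end flip2

set_option maxHeartbeats 1000000 in
/-- For the flip-flop poset `R` (with `z = Sum.inr false`), if `e(P−x) > 0` and
`e(Q−y) > 0`, then `ρ(R,z) = ρ(P,x) + ρ(Q,y)` where `ρ(S,s) = e(S)/e(S−s)`. -/
theorem flipflop_rho (α β : Type) [Fintype α] [Fintype β]
    [DecidableEq α] [DecidableEq β]
    (O : PartialOrder α) (O' : PartialOrder β)
    (x : α) (hx : isMinimal O x) (y : β) (hy : isMinimal O' y)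
    (hP : 0 < eDel α O x) (hQ : 0 < eDel β O' y) :
    (eCount (FlipCarrier α β x y) (ffOrder O O' x y) : ℚ) /
        (eDel (FlipCarrier α β x y) (ffOrder O O' x y) (Sum.inr false) : ℚ) =
      (eCount α O : ℚ) / (eDel α O x : ℚ) +
        (eCount β O' : ℚ) / (eDel β O' y : ℚ) := by
  classical
  have h1 := eCount_ff O O' x y hx hy
  rw [eCount_lin, eCount_lin, eCount_lin, eCount_lin, eCount_dual, eCount_dual,
    eCount_punit] at h1
  have h2 := eDel_ff O O' x y
  rw [eCount_lin, eCount_lin, eCount_dual, eCount_punit] at h2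
  have e1 : eDel β O' y = eCount {b : β // b ≠ y} (delOrder O' y) := rfl
  have e2 : eDel α O x = eCount {a : α // a ≠ x} (delOrder O x) := rfl
  rw [h1, h2, e1, e2]
  have hP' : (eCount {a : α // a ≠ x} (delOrder O x) : ℚ) ≠ 0 := by
    rw [← e2]
    exact_mod_cast hP.ne'
  have hQ' : (eCount {b : β // b ≠ y} (delOrder O' y) : ℚ) ≠ 0 := by
    rw [← e1]
    exact_mod_cast hQ.ne'
  push_cast
  field_simp
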